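/- Let Y ∈ ℝ^{c×n} have rank c with singular values μ₁ ≥ … ≥ μ_c and SVD Y = U_Y Σ_Y V_Yᵀ. Let d < c and let X ∈ ℝ^{d×n} have rank d with fixed singular values σ₁ ≥ … ≥ σ_d and fixed left singular vectors. Then the minimum over V_X ∈ St_d(ℝⁿ) of ‖[Y ; U_X Σ_X V_Xᵀ]‖₊ equals Σ_{i=1}^{d} √(μ_i² + σ_i²) + Σ_{i=d+1}^{c} μ_i, attained when V_X consists of the first d columns of V_Y. -/

import Mathlib

open Matrix

/-- The nuclear norm of a real matrix: the sum of its singular values. -/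
noncomputable def nuclearNorm {m n : Type*} [Fintype m] [Fintype n] [DecidableEq n]
    (A : Matrix m n ℝ) : ℝ :=
  ∑ i, Real.sqrt ((Matrix.isHermitian_conjTranspose_mul_self A).eigenvalues i)

/-!
Writing `Y = U_Y Σ_Y V_Yᵀ` and `X = U_X Σ_X V_Xᵀ`, the Gram matrix of the stack `[Y ; X]` is
`C = V_Y Σ_Y² V_Yᵀ + V_X Σ_X² V_Xᵀ`, and the nuclear norm is `∑ √λᵢ(C)`. By Ky Fan's maximum
principle the `k` largest eigenvalues of `C` sum to at most `∑_{i<k} (μᵢ² + σᵢ²)`, and the traces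
agree, so the decreasing spectrum of `C` is majorized by `(μᵢ² + σᵢ²)ᵢ`; concavity of `√`
(Karamata, proved here by Abel summation) gives the lower bound. When `V_X` is the first `d`
columns of `V_Y`, `C = V_Y diag(μᵢ² + σᵢ²) V_Yᵀ`, whose square root has trace
`∑ √(μᵢ² + σᵢ²)`.
-/

open Finset Real

def extendByZero {M : Type*} [Zero M] {c : ℕ} (f : Fin c → M) (i : ℕ) : M :=
  if h : i < c then f ⟨i, h⟩ else 0

section extendByZero

variable {M : Type*} {c : ℕ}

@[simp]
lemma extendByZero_val [Zero M] (f : Fin c → M) (i : Fin c) : extendByZero f i = f i :=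
  dif_pos i.isLt

lemma extendByZero_of_le [Zero M] (f : Fin c → M) {i : ℕ} (hi : c ≤ i) : extendByZero f i = 0 :=
  dif_neg hi.not_gt

lemma extendByZero_nonneg [Zero M] [Preorder M] {f : Fin c → M} (hf : 0 ≤ f) (i : ℕ) :
    0 ≤ extendByZero f i := by
  unfold extendByZero
  split_ifs
  exacts [hf _, le_rfl]

lemma antitone_extendByZero [Zero M] [Preorder M] {f : Fin c → M} (hf : Antitone f) (hf0 : 0 ≤ f) :
    Antitone (extendByZero f) := by
  intro i j hij
  by_cases hj : j < c
  · simp only [extendByZero, hj, hij.trans_lt hj, dite_true]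
    exact hf hij
  · rw [extendByZero_of_le f (not_lt.1 hj)]
    exact extendByZero_nonneg hf0 i

lemma sum_range_extendByZero [AddCommMonoid M] (f : Fin c → M) {N : ℕ} (hN : c ≤ N) :
    ∑ i ∈ range N, extendByZero f i = ∑ i, f i := by
  rw [eventually_constant_sum (fun i hi => extendByZero_of_le f hi) hN,
    ← Fin.sum_univ_eq_sum_range]
  simp

lemma sum_extendByZero_fin [AddCommMonoid M] {d : ℕ} (h : d ≤ c) (f : Fin d → M) :
    ∑ q : Fin c, extendByZero f q = ∑ i, f i := by
  rw [Fin.sum_univ_eq_sum_range (extendByZero f), sum_range_extendByZero f h]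

end extendByZero

lemma sqrt_sub_sqrt_eq_inv_mul {a b : ℝ} (ha : 0 ≤ a) (hb : 0 ≤ b) :
    √b - √a = (√a + √b)⁻¹ * (b - a) := by
  rcases (add_nonneg (sqrt_nonneg a) (sqrt_nonneg b)).eq_or_lt with h | h
  · rw [eq_comm, add_eq_zero_iff_of_nonneg (sqrt_nonneg a) (sqrt_nonneg b), sqrt_eq_zero ha,
      sqrt_eq_zero hb] at h
    simp [h.1, h.2]
  · field_simp
    nlinarith [sq_sqrt ha, sq_sqrt hb]

theorem sum_sqrt_le_sum_sqrt_of_majorizes {a b : ℕ → ℝ} {N : ℕ}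
    (ha : Antitone a) (hb : Antitone b) (ha0 : 0 ≤ a) (hb0 : 0 ≤ b)
    (hpart : ∀ k ≤ N, ∑ i ∈ range k, a i ≤ ∑ i ∈ range k, b i)
    (htot : ∑ i ∈ range N, a i = ∑ i ∈ range N, b i) :
    ∑ i ∈ range N, √(b i) ≤ ∑ i ∈ range N, √(a i) := by
  set t : ℕ → ℝ := fun i => (√(a i) + √(b i))⁻¹
  set D : ℕ → ℝ := fun k => ∑ i ∈ range k, (b i - a i)
  have hD : ∀ k ≤ N, 0 ≤ D k := fun k hk => by
    simpa [D, sum_sub_distrib] using hpart k hk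
  have hDN : D N = 0 := by simp [D, sum_sub_distrib, htot]
  -- `t` is nondecreasing until `a` and `b` both vanish, and from then on `D` is constant
  have hstep : ∀ i, i + 1 < N → 0 ≤ (t (i + 1) - t i) * D (i + 1) := by
    intro i hi
    by_cases hpos : 0 < √(a (i + 1)) + √(b (i + 1))
    · refine mul_nonneg (sub_nonneg.2 (inv_anti₀ hpos ?_)) (hD _ hi.le)
      gcongr <;> apply_rules [Nat.le_succ]
    · have hzero : ∀ j ≥ i + 1, b j - a j = 0 := fun j hj => by
        have h : √(a j) + √(b j) = 0 := le_antisymm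
          ((add_le_add (sqrt_le_sqrt (ha hj)) (sqrt_le_sqrt (hb hj))).trans (not_lt.1 hpos))
          (by positivity)
        rw [add_eq_zero_iff_of_nonneg (sqrt_nonneg _) (sqrt_nonneg _), sqrt_eq_zero (ha0 j),
          sqrt_eq_zero (hb0 j)] at h
        rw [h.1, h.2, sub_zero]
      have : D (i + 1) = D N := (eventually_constant_sum hzero hi.le).symm
      rw [this, hDN, mul_zero]
  have hsum : ∑ i ∈ range N, √(b i) - ∑ i ∈ range N, √(a i)
      = ∑ i ∈ range N, t i • (b i - a i) := by
    rw [← sum_sub_distrib]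
    exact sum_congr rfl fun i _ => sqrt_sub_sqrt_eq_inv_mul (ha0 i) (hb0 i)
  have habel : ∑ i ∈ range N, t i • (b i - a i) ≤ 0 := by
    rw [sum_range_by_parts]
    change t (N - 1) • D N - ∑ i ∈ range (N - 1), (t (i + 1) - t i) • D (i + 1) ≤ 0
    rw [hDN, smul_zero, zero_sub, neg_nonpos]
    exact sum_nonneg fun i hi => hstep i (by simp at hi; omega)
  linarith

theorem sum_mul_le_sum_range_of_antitone {ρ w : ℕ → ℝ} (hρ : Antitone ρ) (hρ0 : 0 ≤ ρ)
    (hw0 : ∀ i, 0 ≤ w i) (hw1 : ∀ i, w i ≤ 1) {N k : ℕ} (hwk : ∑ i ∈ range N, w i ≤ k) :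
    ∑ i ∈ range N, w i * ρ i ≤ ∑ i ∈ range k, ρ i := by
  set m := ρ k
  -- each `ρ i` is split at the threshold `ρ k`
  have hterm : ∀ i, w i * ρ i ≤ w i * m + if i < k then ρ i - m else 0 := by
    intro i
    split_ifs with hik
    · nlinarith [mul_nonneg (sub_nonneg.2 (hw1 i)) (sub_nonneg.2 (hρ hik.le))]
    · nlinarith [mul_nonneg (hw0 i) (sub_nonneg.2 (hρ (not_lt.1 hik)))]
  calc ∑ i ∈ range N, w i * ρ i
      ≤ ∑ i ∈ range N, (w i * m + if i < k then ρ i - m else 0) := sum_le_sum fun i _ => hterm i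
    _ = m * ∑ i ∈ range N, w i + ∑ i ∈ range N with i < k, (ρ i - m) := by
      rw [sum_add_distrib, mul_sum, ← sum_filter]
      simp only [mul_comm]
    _ ≤ m * k + ∑ i ∈ range k, (ρ i - m) := by
      refine add_le_add (mul_le_mul_of_nonneg_left hwk (hρ0 k)) ?_
      exact sum_le_sum_of_subset_of_nonneg (fun i hi => by simp at hi ⊢; omega)
        fun i hi _ => sub_nonneg.2 (hρ (mem_range.1 hi).le)
    _ = ∑ i ∈ range k, ρ i := by
      rw [sum_sub_distrib, sum_const, card_range, nsmul_eq_mul]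
      ring

section Matrix

variable {m : Type*} [Fintype m]

lemma card_le_card_of_transpose_mul_self_eq_one {ι : Type*} [Fintype ι] [DecidableEq ι]
    {W : Matrix m ι ℝ} (hW : Wᵀ * W = 1) : Fintype.card ι ≤ Fintype.card m := by
  simpa [← rank_transpose_mul_self W, hW, rank_one] using rank_le_card_height W

lemma trace_conj_diagonal {ι : Type*} [Fintype ι] [DecidableEq ι] {W : Matrix m ι ℝ}
    (hW : Wᵀ * W = 1) (τ : ι → ℝ) : trace (W * diagonal τ * Wᵀ) = ∑ i, τ i := by
  rw [trace_mul_cycle, hW, Matrix.one_mul, trace_diagonal]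

lemma diag_transpose_mul_self_nonneg {ι : Type*} {κ : Type*} [Fintype κ] (X : Matrix κ ι ℝ)
    (i : ι) : 0 ≤ (Xᵀ * X) i i :=
  sum_nonneg fun j _ => mul_self_nonneg (X j i)

lemma posSemidef_conj_diagonal {ι : Type*} [Fintype ι] [DecidableEq ι] (W : Matrix m ι ℝ)
    {τ : ι → ℝ} (hτ : 0 ≤ τ) : (W * diagonal τ * Wᵀ).PosSemidef := by
  simpa [conjTranspose_eq_transpose_of_trivial] using
    (posSemidef_diagonal_iff.2 hτ).mul_mul_conjTranspose_same W

lemma diag_transpose_mul_self_le_of_isometry {k ι : Type*} [Fintype k] [DecidableEq k]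
    {V : Matrix m k ℝ} (hV : Vᵀ * V = 1) (B : Matrix m ι ℝ) (i : ι) :
    ((Vᵀ * B)ᵀ * (Vᵀ * B)) i i ≤ (Bᵀ * B) i i := by
  classical
  set P : Matrix m m ℝ := 1 - V * Vᵀ
  have hP : Pᵀ * P = P := by
    simp only [P, transpose_sub, transpose_one, transpose_mul, transpose_transpose,
      Matrix.sub_mul, Matrix.mul_sub, Matrix.one_mul, Matrix.mul_one]
    rw [Matrix.mul_assoc, ← Matrix.mul_assoc Vᵀ, hV, Matrix.one_mul]
    abel
  have hgap : (P * B)ᵀ * (P * B) = Bᵀ * B - (Vᵀ * B)ᵀ * (Vᵀ * B) := by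
    rw [transpose_mul, Matrix.mul_assoc, ← Matrix.mul_assoc Pᵀ, hP]
    simp only [P, transpose_mul, transpose_transpose, Matrix.sub_mul, Matrix.mul_sub,
      Matrix.one_mul, Matrix.mul_assoc]
  have h0 := diag_transpose_mul_self_nonneg (P * B) i
  rw [hgap] at h0
  simpa [sub_nonneg] using h0

lemma transpose_submatrix_mul_mul_submatrix {k : Type*} (U D : Matrix m m ℝ) (p : k → m) :
    (U.submatrix id p)ᵀ * D * U.submatrix id p = (Uᵀ * D * U).submatrix p p := by
  ext i j
  simp only [mul_apply, submatrix_apply, transpose_apply, id_eq, sum_mul]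

theorem trace_compression_conj_diagonal_le {c k : ℕ} {W : Matrix m (Fin c) ℝ}
    {V : Matrix m (Fin k) ℝ} (hW : Wᵀ * W = 1) (hV : Vᵀ * V = 1) {α : Fin c → ℝ}
    (hα : Antitone α) (hα0 : 0 ≤ α) :
    trace (Vᵀ * (W * diagonal α * Wᵀ) * V) ≤ ∑ i ∈ range k, extendByZero α i := by
  set G := Vᵀ * W
  set w : ℕ → ℝ := extendByZero fun i => (Gᵀ * G) i i
  have hw0 : ∀ i, 0 ≤ w i := extendByZero_nonneg (diag_transpose_mul_self_nonneg G)
  have hw1 : ∀ i, w i ≤ 1 := by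
    intro i
    unfold w extendByZero
    split_ifs with hi
    · exact (diag_transpose_mul_self_le_of_isometry hV W _).trans_eq (by rw [hW, one_apply_eq])
    · exact zero_le_one
  have hwk : ∑ i ∈ range c, w i ≤ k := by
    rw [sum_range_extendByZero _ le_rfl]
    calc ∑ i, (Gᵀ * G) i i = trace ((Wᵀ * V)ᵀ * (Wᵀ * V)) := by
          rw [trace_mul_comm]; simp [G, transpose_mul, trace]
      _ ≤ ∑ _j : Fin k, (1 : ℝ) := sum_le_sum fun j _ => by
          simpa [hV] using diag_transpose_mul_self_le_of_isometry hW V j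
      _ = k := by simp
  have htrace :
      trace (Vᵀ * (W * diagonal α * Wᵀ) * V) = ∑ i ∈ range c, w i * extendByZero α i := by
    rw [show Vᵀ * (W * diagonal α * Wᵀ) * V = G * diagonal α * Gᵀ by
        simp [G, transpose_mul, Matrix.mul_assoc],
      trace_mul_cycle, ← Fin.sum_univ_eq_sum_range (fun i => w i * extendByZero α i)]
    simp [w, trace, mul_comm]
  rw [htrace]
  exact sum_mul_le_sum_range_of_antitone (antitone_extendByZero hα hα0)
    (extendByZero_nonneg hα0) hw0 hw1 hwk

end Matrix

section Hermitian

variable {m : Type*} [Fintype m] [DecidableEq m] {C : Matrix m m ℝ}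

-- `eigenvalues₀` is the spectrum sorted decreasingly; `eigenvalues` reindexes it along an
-- arbitrary equivalence `Fin (card m) ≃ m`, so it is not sorted even when `m = Fin n`.
lemma Matrix.IsHermitian.sum_comp_eigenvalues (hC : C.IsHermitian) (f : ℝ → ℝ) :
    ∑ i, f (hC.eigenvalues i) =
      ∑ i ∈ range (Fintype.card m), f (extendByZero hC.eigenvalues₀ i) := by
  rw [← Fin.sum_univ_eq_sum_range (fun i => f (extendByZero hC.eigenvalues₀ i))]
  simp only [extendByZero_val]
  exact Equiv.sum_comp (Fintype.equivOfCardEq (Fintype.card_fin _)).symm (f ∘ hC.eigenvalues₀)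

lemma Matrix.IsHermitian.transpose_eigenvectorUnitary_mul_self (hC : C.IsHermitian) :
    (hC.eigenvectorUnitary : Matrix m m ℝ)ᵀ * hC.eigenvectorUnitary = 1 := by
  simpa [star_eq_conjTranspose] using Unitary.coe_star_mul_self hC.eigenvectorUnitary

lemma Matrix.IsHermitian.transpose_eigenvectorUnitary_mul_mul (hC : C.IsHermitian) :
    (hC.eigenvectorUnitary : Matrix m m ℝ)ᵀ * C * hC.eigenvectorUnitary =
      diagonal hC.eigenvalues := by
  simpa [Unitary.conjStarAlgAut_star_apply, star_eq_conjTranspose] using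
    hC.conjStarAlgAut_star_eigenvectorUnitary

lemma Matrix.IsHermitian.trace_cfc (hC : C.IsHermitian) (f : ℝ → ℝ) :
    trace (cfc f C) = ∑ i, f (hC.eigenvalues i) := by
  rw [hC.cfc_eq, IsHermitian.cfc, Unitary.conjStarAlgAut_apply, trace_mul_cycle,
    Unitary.coe_star_mul_self, Matrix.one_mul, trace_diagonal]
  simp

theorem Matrix.IsHermitian.exists_trace_compression_eq_sum_eigenvalues₀ (hC : C.IsHermitian) {k : ℕ}
    (hk : k ≤ Fintype.card m) :
    ∃ V : Matrix m (Fin k) ℝ, Vᵀ * V = 1 ∧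
      trace (Vᵀ * C * V) = ∑ i ∈ range k, extendByZero hC.eigenvalues₀ i := by
  set e := Fintype.equivOfCardEq (Fintype.card_fin (Fintype.card m))
  set U : Matrix m m ℝ := (hC.eigenvectorUnitary : Matrix m m ℝ)
  have hp : Function.Injective (e ∘ Fin.castLE hk) := e.injective.comp (Fin.castLE_injective hk)
  refine ⟨U.submatrix id (e ∘ Fin.castLE hk), ?_, ?_⟩
  · simpa [U, hC.transpose_eigenvectorUnitary_mul_self, submatrix_one _ hp] using
      transpose_submatrix_mul_mul_submatrix U 1 (e ∘ Fin.castLE hk)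
  · rw [transpose_submatrix_mul_mul_submatrix, hC.transpose_eigenvectorUnitary_mul_mul,
      submatrix_diagonal _ _ hp, trace_diagonal, ← Fin.sum_univ_eq_sum_range]
    refine sum_congr rfl fun i _ => ?_
    rw [← Fin.val_castLE hk i, extendByZero_val]
    simp [e, Matrix.IsHermitian.eigenvalues]

end Hermitian

section NuclearNorm

variable {m p : Type*} [Fintype m] [Fintype p] [DecidableEq m]

lemma nuclearNorm_eq_sum_sqrt_eigenvalues {A : Matrix p m ℝ} {C : Matrix m m ℝ}
    (hA : Aᵀ * A = C) (hC : C.IsHermitian) : nuclearNorm A = ∑ i, √(hC.eigenvalues i) := by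
  subst hA
  rfl

theorem sum_sqrt_add_le_nuclearNorm {c d : ℕ} {A : Matrix p m ℝ} {W₁ : Matrix m (Fin c) ℝ}
    {W₂ : Matrix m (Fin d) ℝ} (hW₁ : W₁ᵀ * W₁ = 1) (hW₂ : W₂ᵀ * W₂ = 1) {α : Fin c → ℝ}
    {β : Fin d → ℝ} (hα : Antitone α) (hβ : Antitone β) (hα0 : 0 ≤ α) (hβ0 : 0 ≤ β)
    (hA : Aᵀ * A = W₁ * diagonal α * W₁ᵀ + W₂ * diagonal β * W₂ᵀ) :
    ∑ i ∈ range (Fintype.card m), √(extendByZero α i + extendByZero β i) ≤ nuclearNorm A := by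
  have hpsd : (Aᵀ * A).PosSemidef :=
    hA ▸ (posSemidef_conj_diagonal W₁ hα0).add (posSemidef_conj_diagonal W₂ hβ0)
  set hC := hpsd.isHermitian
  have hℓ0 : 0 ≤ hC.eigenvalues₀ := fun i => by
    simpa [IsHermitian.eigenvalues] using
      hpsd.eigenvalues_nonneg (Fintype.equivOfCardEq (Fintype.card_fin _) i)
  have hpart : ∀ k ≤ Fintype.card m, ∑ i ∈ range k, extendByZero hC.eigenvalues₀ i ≤
      ∑ i ∈ range k, (extendByZero α i + extendByZero β i) := fun k hk => by
    obtain ⟨V, hV, htr⟩ := hC.exists_trace_compression_eq_sum_eigenvalues₀ hk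
    rw [← htr, hA, Matrix.mul_add, Matrix.add_mul, trace_add, sum_add_distrib]
    exact add_le_add (trace_compression_conj_diagonal_le hW₁ hV hα hα0)
      (trace_compression_conj_diagonal_le hW₂ hV hβ hβ0)
  have htot : ∑ i ∈ range (Fintype.card m), extendByZero hC.eigenvalues₀ i =
      ∑ i ∈ range (Fintype.card m), (extendByZero α i + extendByZero β i) := by
    have hc := card_le_card_of_transpose_mul_self_eq_one hW₁
    have hd := card_le_card_of_transpose_mul_self_eq_one hW₂
    simp only [Fintype.card_fin] at hc hd
    rw [sum_add_distrib, sum_range_extendByZero α hc, sum_range_extendByZero β hd,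
      ← trace_conj_diagonal hW₁, ← trace_conj_diagonal hW₂, ← trace_add, ← hA,
      hC.trace_eq_sum_eigenvalues]
    simpa using (hC.sum_comp_eigenvalues id).symm
  calc ∑ i ∈ range (Fintype.card m), √(extendByZero α i + extendByZero β i)
      ≤ ∑ i ∈ range (Fintype.card m), √(extendByZero hC.eigenvalues₀ i) :=
        sum_sqrt_le_sum_sqrt_of_majorizes (antitone_extendByZero hC.eigenvalues₀_antitone hℓ0)
          ((antitone_extendByZero hα hα0).add (antitone_extendByZero hβ hβ0))
          (extendByZero_nonneg hℓ0)
          (fun i => add_nonneg (extendByZero_nonneg hα0 i) (extendByZero_nonneg hβ0 i))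
          hpart htot
    _ = nuclearNorm A := by
      rw [nuclearNorm_eq_sum_sqrt_eigenvalues rfl hC, hC.sum_comp_eigenvalues]

open scoped MatrixOrder in
theorem nuclearNorm_eq_sum_sqrt {ι : Type*} [Fintype ι] [DecidableEq ι] {A : Matrix p m ℝ}
    {W : Matrix m ι ℝ} (hW : Wᵀ * W = 1) {τ : ι → ℝ} (hτ : 0 ≤ τ)
    (hA : Aᵀ * A = W * diagonal τ * Wᵀ) : nuclearNorm A = ∑ i, √(τ i) := by
  set R := W * diagonal (fun i => √(τ i)) * Wᵀ
  have hR : R * R = Aᵀ * A := by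
    rw [hA]
    simp only [R, Matrix.mul_assoc]
    rw [← Matrix.mul_assoc Wᵀ W, hW, Matrix.one_mul, ← Matrix.mul_assoc (diagonal _),
      diagonal_mul_diagonal]
    simp_rw [mul_self_sqrt (hτ _)]
  have hR0 : 0 ≤ R := nonneg_iff_posSemidef.2 (posSemidef_conj_diagonal W fun i => sqrt_nonneg _)
  have hpsd : (Aᵀ * A).PosSemidef := hA ▸ posSemidef_conj_diagonal W hτ
  calc nuclearNorm A = trace (cfc sqrt (Aᵀ * A)) := by
        rw [nuclearNorm_eq_sum_sqrt_eigenvalues rfl hpsd.1, hpsd.1.trace_cfc]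
    _ = trace R := by
        rw [← cfcₙ_eq_cfc, ← CFC.sqrt_eq_real_sqrt _ (nonneg_iff_posSemidef.2 hpsd),
          CFC.sqrt_unique hR hR0]
    _ = ∑ i, √(τ i) := trace_conj_diagonal hW _

end NuclearNorm

lemma transpose_mul_self_svd {κ ι m : Type*} [Fintype κ] [Fintype ι] [DecidableEq ι]
    {U : Matrix κ ι ℝ} (hU : Uᵀ * U = 1) (s : ι → ℝ) (V : Matrix m ι ℝ) :
    (U * diagonal s * Vᵀ)ᵀ * (U * diagonal s * Vᵀ) = V * diagonal (fun i => s i ^ 2) * Vᵀ := by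
  simp only [transpose_mul, transpose_transpose, diagonal_transpose, Matrix.mul_assoc]
  rw [← Matrix.mul_assoc Uᵀ, hU, Matrix.one_mul, ← Matrix.mul_assoc (diagonal s),
    diagonal_mul_diagonal]
  simp only [sq]

lemma submatrix_castLE_conj_diagonal {m : Type*} {c d : ℕ} (h : d ≤ c) (A : Matrix m (Fin c) ℝ)
    (s : Fin d → ℝ) :
    A.submatrix id (Fin.castLE h) * diagonal s * (A.submatrix id (Fin.castLE h))ᵀ =
      A * diagonal (fun q : Fin c => extendByZero s q) * Aᵀ := by
  ext i j
  rw [mul_apply, mul_apply]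
  simp only [mul_diagonal, transpose_apply, submatrix_apply, id_eq]
  rw [← sum_extendByZero_fin h]
  refine sum_congr rfl fun q _ => ?_
  unfold extendByZero
  split_ifs <;> simp

lemma sum_range_sqrt_extendByZero_add {c d N : ℕ} (hdc : d ≤ c) (hcN : c ≤ N) (f : Fin c → ℝ)
    (g : Fin d → ℝ) :
    ∑ i ∈ range N, √(extendByZero f i + extendByZero g i) =
      ∑ q : Fin c, √(f q + extendByZero g q) := by
  rw [eventually_constant_sum (fun i hi => by
      rw [extendByZero_of_le f hi, extendByZero_of_le g (hdc.trans hi), add_zero, sqrt_zero]) hcN,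
    ← Fin.sum_univ_eq_sum_range]
  simp

lemma sum_sqrt_sq_add_extendByZero {c d : ℕ} (h : d ≤ c) {μ : Fin c → ℝ} (hμ : 0 ≤ μ)
    (σ : Fin d → ℝ) :
    ∑ q : Fin c, √(μ q ^ 2 + extendByZero (fun i => σ i ^ 2) q) =
      ∑ i : Fin d, √(μ (Fin.castLE h i) ^ 2 + σ i ^ 2) +
        ∑ q : Fin c, if d ≤ (q : ℕ) then μ q else 0 := by
  rw [← sum_extendByZero_fin h, ← sum_add_distrib]
  refine sum_congr rfl fun q _ => ?_
  unfold extendByZero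
  split_ifs
  · omega
  · rw [add_zero]
    rfl
  · simp [sqrt_sq (hμ q)]
  · omega

/-- For rank-`c` `Y = U_Y Σ_Y V_Yᵀ` with singular values
`μ₁ ≥ … ≥ μ_c > 0` and `d < c`, and `X` of rank `d` with fixed singular values
`σ₁ ≥ … ≥ σ_d > 0` and fixed left singular vectors `U_X`, the minimum over
`V_X ∈ St_d(ℝⁿ)` of `‖[Y ; U_X Σ_X V_Xᵀ]‖₊` equals
`∑_{i=1}^{d} √(μ_i² + σ_i²) + ∑_{i=d+1}^{c} μ_i`, attained when `V_X`
consists of the first `d` columns of `V_Y`. -/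
theorem nuclearNorm_stack_min_over_stiefel_low_dim
    {c d n : ℕ} (hdc : d < c) (Y : Matrix (Fin c) (Fin n) ℝ)
    (UY : Matrix (Fin c) (Fin c) ℝ) (μ : Fin c → ℝ) (VY : Matrix (Fin n) (Fin c) ℝ)
    (hUY : UYᵀ * UY = 1) (hVY : VYᵀ * VY = 1)
    (hμanti : Antitone μ) (hμpos : ∀ i, 0 < μ i)
    (hSVD : Y = UY * Matrix.diagonal μ * VYᵀ)
    (UX : Matrix (Fin d) (Fin d) ℝ) (σ : Fin d → ℝ)
    (hUX : UXᵀ * UX = 1)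
    (hσanti : Antitone σ) (hσpos : ∀ i, 0 < σ i) :
    (∀ VX : Matrix (Fin n) (Fin d) ℝ, VXᵀ * VX = 1 →
        ((∑ i : Fin d, Real.sqrt (μ (Fin.castLE hdc.le i) ^ 2 + σ i ^ 2)) +
            ∑ i : Fin c, (if d ≤ (i : ℕ) then μ i else 0)) ≤
          nuclearNorm (fromRows Y (UX * Matrix.diagonal σ * VXᵀ))) ∧
      nuclearNorm (fromRows Y
          (UX * Matrix.diagonal σ * (VY.submatrix id (Fin.castLE hdc.le))ᵀ)) =
        (∑ i : Fin d, Real.sqrt (μ (Fin.castLE hdc.le i) ^ 2 + σ i ^ 2)) +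
          ∑ i : Fin c, (if d ≤ (i : ℕ) then μ i else 0) := by
  have hcn : c ≤ n := by simpa using card_le_card_of_transpose_mul_self_eq_one hVY
  have hμ0 : 0 ≤ μ := fun i => (hμpos i).le
  have hμ2 : Antitone fun i => μ i ^ 2 := fun i j hij => pow_le_pow_left₀ (hμ0 j) (hμanti hij) 2
  have hσ2 : Antitone fun i => σ i ^ 2 := fun i j hij =>
    pow_le_pow_left₀ (hσpos j).le (hσanti hij) 2
  have hgram : ∀ VX : Matrix (Fin n) (Fin d) ℝ,
      (fromRows Y (UX * diagonal σ * VXᵀ))ᵀ * fromRows Y (UX * diagonal σ * VXᵀ) =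
        VY * diagonal (fun i => μ i ^ 2) * VYᵀ + VX * diagonal (fun i => σ i ^ 2) * VXᵀ := by
    intro VX
    rw [transpose_fromRows, fromCols_mul_fromRows, hSVD, transpose_mul_self_svd hUY,
      transpose_mul_self_svd hUX]
  rw [← sum_sqrt_sq_add_extendByZero hdc.le hμ0]
  refine ⟨fun VX hVX => ?_, ?_⟩
  · simpa [sum_range_sqrt_extendByZero_add hdc.le hcn] using
      sum_sqrt_add_le_nuclearNorm hVY hVX hμ2 hσ2 (fun i => sq_nonneg _) (fun i => sq_nonneg _)
        (hgram VX)
  · refine nuclearNorm_eq_sum_sqrt hVY (fun q => add_nonneg (sq_nonneg _)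
      (extendByZero_nonneg (fun i => sq_nonneg (σ i)) q)) ?_
    rw [hgram, submatrix_castLE_conj_diagonal, ← Matrix.add_mul, ← Matrix.mul_add, diagonal_add]
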